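/- arXiv:2408.10728 — 4 statements merged into one kernel-verified Lean document; each statement's English description precedes it below -/
import Mathlib

section
/- Let Q^+(q,t) ∈ ℤ⟦q,t⟧ be the unique power series with no constant term satisfying the recursion q^+ = q + ∑_{r≥3} (t + t^2 + ⋯ + t^{r-2}) · (h_r ∘ q^+), where h_r ∘ f denotes plethysm with the complete homogeneous symmetric function. Then q^+ also satisfies the exponential equation Exp(t·q^+) = t^2·Exp(q^+) + (1-t)(1+t+qt). -/
noncomputable section

/-- The ring `ℚ⟦q,t⟧` of formal power series in two variables. -/
abbrev QT := MvPowerSeries (Fin 2) ℚ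

namespace QT

/-- The variable `q`. -/
def q : QT := MvPowerSeries.X 0
/-- The variable `t`. -/
def t : QT := MvPowerSeries.X 1

/-- Total degree of a monomial exponent. -/
def deg (d : Fin 2 →₀ ℕ) : ℕ := d 0 + d 1

/-- The substitution `f(q,t) ↦ f(q^r, t^r)`. -/
def raise (r : ℕ) (f : QT) : QT := fun d =>
  if ∀ i, r ∣ d i then
    MvPowerSeries.coeff (R := ℚ) (d.mapRange (· / r) (Nat.zero_div r)) f
  else 0

/-- `∑_{r ≥ 1} f(q^r,t^r)/r`, defined coefficientwise (for `f` with zero constant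
term only the finitely many `r` dividing the exponent contribute). -/
def plethSum (f : QT) : QT := fun d =>
  ∑ r ∈ Finset.Icc 1 (deg d), ((r : ℚ)⁻¹) * MvPowerSeries.coeff (R := ℚ) d (raise r f)

/-- The ordinary formal exponential `exp g = ∑_m g^m/m!`, defined coefficientwise
(valid for `g` with zero constant term). -/
def mExp (g : QT) : QT := fun d =>
  ∑ m ∈ Finset.range (deg d + 1),
    ((m.factorial : ℚ)⁻¹) * MvPowerSeries.coeff (R := ℚ) d (g ^ m)

/-- The plethystic exponential `Exp f = exp (∑_{r≥1} f(q^r,t^r)/r)`. -/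
def PExp (f : QT) : QT := mExp (plethSum f)

end QT

end
/-- `z_λ = ∏_i i^{m_i}·m_i!` for a partition `λ` with `m_i` parts equal to `i`. -/
def zPartition {n : ℕ} (lam : n.Partition) : ℕ :=
  ∏ i ∈ lam.parts.toFinset, i ^ lam.parts.count i * (lam.parts.count i).factorial

namespace QT

/-- Plethysm with the complete homogeneous symmetric function:
`h_r ∘ f = ∑_{λ ⊢ r} z_λ⁻¹ ∏_i f(q^{λ_i}, t^{λ_i})`. -/
noncomputable def hPleth (r : ℕ) (f : QT) : QT :=
  ∑ lam : r.Partition,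
    ((zPartition lam : ℚ)⁻¹) • (lam.parts.map (fun i => raise i f)).prod

end QT

/-! Both sides are compared modulo terms of total degree `≥ n`, for every `n`, where they
become identities in a ring. There `Exp f` equals `∑_{k<n} h_k ∘ f`: expanding
`exp (∑_r f(q^r,t^r)/r)` by the multinomial theorem, a multiset `μ` of exponents `r`
contributes `z_μ⁻¹ ∏_i f(q^{μ_i},t^{μ_i})`, which is precisely the term of `μ`, viewed as a
partition, in `h_{|μ|} ∘ f`. As `h_k ∘ (t f) = t^k (h_k ∘ f)`, the claim becomes
`∑_k (t^k - t²) (h_k ∘ q⁺) = (1-t)(1+t+qt)`. Since `t^k - t² = -(1-t) t (t + ⋯ + t^{k-2})`,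
the recursion sums the terms `k ≥ 3` to `-(1-t) t (q⁺ - q)`, and `h_0 ∘ q⁺ = 1`,
`h_1 ∘ q⁺ = q⁺` supply the rest. -/

open Finset MvPowerSeries Filter

theorem Multiset.prod_factorial_count_mul_countPerms {α : Type*} [DecidableEq α]
    (μ : Multiset α) :
    (∏ a ∈ μ.toFinset, (μ.count a).factorial) * μ.countPerms = (Multiset.card μ).factorial := by
  rw [← Multiset.toFinset_sum_count_eq]
  exact Nat.multinomial_spec _ _

theorem pow_multiset_sum {M : Type*} [CommMonoid M] (x : M) (μ : Multiset ℕ) :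
    x ^ μ.sum = (μ.map (x ^ ·)).prod := by
  induction μ using Multiset.induction_on with
  | empty => simp
  | cons a μ ih => simp [pow_add, ih]

def zMultiset (μ : Multiset ℕ) : ℕ :=
  ∏ i ∈ μ.toFinset, i ^ μ.count i * (μ.count i).factorial

theorem zPartition_eq_zMultiset {n : ℕ} (p : n.Partition) : zPartition p = zMultiset p.parts :=
  rfl

theorem inv_zMultiset (μ : Multiset ℕ) :
    (zMultiset μ : ℚ)⁻¹ =
      ((Multiset.card μ).factorial : ℚ)⁻¹ * μ.countPerms * (μ.prod : ℚ)⁻¹ := by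
  have hC : (μ.countPerms : ℚ) ≠ 0 := by exact_mod_cast (Nat.multinomial_pos _ _).ne'
  rw [zMultiset, prod_mul_distrib, ← Finset.prod_multiset_count,
    ← μ.prod_factorial_count_mul_countPerms]
  push_cast
  rw [mul_inv, mul_inv, inv_mul_cancel_right₀ hC, mul_comm]

theorem inv_factorial_smul_sum_pow {A : Type*} [CommSemiring A] [Algebra ℚ A]
    (s : Finset ℕ) (x : ℕ → A) (m : ℕ) :
    (m.factorial : ℚ)⁻¹ • (∑ r ∈ s, (r : ℚ)⁻¹ • x r) ^ m =
      ∑ μ ∈ s.sym m, (zMultiset μ.val : ℚ)⁻¹ • (μ.val.map x).prod := by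
  rw [Finset.sum_pow, Finset.smul_sum]
  refine sum_congr rfl fun μ _ => ?_
  have hprod : (μ.val.map fun r : ℕ => (r : ℚ)⁻¹ • x r).prod =
      (μ.val.prod : ℚ)⁻¹ • (μ.val.map x).prod := by
    simp only [Algebra.smul_def, Multiset.prod_map_mul, Nat.cast_multiset_prod,
      ← Multiset.prod_map_inv, map_multiset_prod, Multiset.map_map, Function.comp_def]
  rw [← nsmul_eq_mul, ← Nat.cast_smul_eq_nsmul ℚ, hprod, smul_smul, smul_smul, inv_zMultiset,
    μ.2]

theorem sum_sym_Icc_eq_sum_partition {M : Type*} [AddCommMonoid M] (D : ℕ)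
    (F : Multiset ℕ → M) (hF : ∀ μ : Multiset ℕ, D < μ.sum → F μ = 0) :
    ∑ m ∈ range (D + 1), ∑ μ ∈ (Icc 1 D).sym m, F μ.val =
      ∑ n ∈ range (D + 1), ∑ p : n.Partition, F p.parts := by
  rw [sum_sigma', sum_sigma', ← sum_filter_of_ne (p := fun x => x.2.1.sum ≤ D)
    fun x _ hx => not_lt.1 fun h => hx (hF _ h)]
  refine sum_bij' (fun x hx => ⟨x.2.1.sum, ⟨x.2.1, fun hi => (mem_Icc.1 (mem_sym_iff.1
      (mem_sigma.1 (mem_filter.1 hx).1).2 _ hi)).1, rfl⟩⟩)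
    (fun y _ => ⟨Multiset.card y.2.parts, ⟨y.2.parts, rfl⟩⟩) ?_ ?_ ?_ ?_ ?_
  · intro x hx
    simpa [Nat.lt_succ_iff] using (mem_filter.1 hx).2
  · rintro ⟨n, p⟩ hp
    have hn : n ≤ D := by simpa [Nat.lt_succ_iff] using hp
    have hcard : Multiset.card p.parts ≤ n := by
      simpa [p.parts_sum] using Multiset.card_nsmul_le_sum (a := 1) fun a ha => p.parts_pos ha
    refine mem_filter.2 ⟨mem_sigma.2 ⟨mem_range.2 (Nat.lt_succ_of_le (hcard.trans hn)),
      mem_sym_iff.2 fun a ha => mem_Icc.2 ⟨p.parts_pos ha, (p.le_of_mem_parts ha).trans hn⟩⟩,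
      p.parts_sum.le.trans hn⟩
  · rintro ⟨m, μ, rfl⟩ _
    rfl
  · rintro ⟨n, ⟨parts, hpos, rfl⟩⟩ _
    rfl
  · intro x _
    rfl

theorem MvPowerSeries.le_order_multiset_prod {σ R : Type*} [CommSemiring R]
    (s : Multiset (MvPowerSeries σ R)) : (s.map order).sum ≤ s.prod.order := by
  induction s using Multiset.induction_on with
  | empty => simp
  | cons a s ih => simpa using (add_le_add_right ih _).trans le_order_mul

theorem MvPowerSeries.coeff_sum_eq_of_subset_of_le_order {σ R : Type*} [Semiring R]
    {g : ℕ → MvPowerSeries σ R} (hg : ∀ r : ℕ, (r : ℕ∞) ≤ (g r).order) {s t : Finset ℕ}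
    (hst : s ⊆ t) {x : σ →₀ ℕ} (hx : ∀ r ∈ t, r ∉ s → x.degree < r) :
    coeff x (∑ r ∈ s, g r) = coeff x (∑ r ∈ t, g r) := by
  rw [map_sum, map_sum]
  exact sum_subset hst fun r hr hrs =>
    coeff_of_lt_order ((hg r).trans_lt' (by exact_mod_cast hx r hr hrs))

section TruncTotal

variable {σ R : Type*} [CommRing R] [Finite σ]

theorem MvPowerSeries.truncTotalAlgHom_eq_iff {n : ℕ} {f g : MvPowerSeries σ R} :
    truncTotalAlgHom σ R n f = truncTotalAlgHom σ R n g ↔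
      ∀ x : σ →₀ ℕ, x.degree < n → coeff x f = coeff x g := by
  simp only [truncTotalAlgHom_apply, Ideal.Quotient.eq, MvPolynomial.mem_pow_idealOfVars_iff',
    MvPolynomial.coeff_sub, sub_eq_zero]
  refine forall₂_congr fun x hx => ?_
  rw [coeff_truncTotal _ hx, coeff_truncTotal _ hx]

theorem MvPowerSeries.eq_of_eventually_truncTotalAlgHom_eq {f g : MvPowerSeries σ R}
    (h : ∀ᶠ n in atTop, truncTotalAlgHom σ R n f = truncTotalAlgHom σ R n g) : f = g := by
  ext x
  obtain ⟨n, hn, hx⟩ := (h.and (eventually_gt_atTop x.degree)).exists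
  exact truncTotalAlgHom_eq_iff.1 hn x hx

end TruncTotal

namespace QT

theorem deg_eq_degree (d : Fin 2 →₀ ℕ) : deg d = d.degree := by
  simp [deg, Finsupp.degree_eq_sum, Fin.sum_univ_two]

theorem raise_eq_expand {r : ℕ} (hr : r ≠ 0) (f : QT) : raise r f = expand r hr f := by
  ext d
  by_cases hd : ∀ i, r ∣ d i
  · obtain ⟨m, rfl⟩ : ∃ m, r • m = d :=
      ⟨d.mapRange (· / r) (Nat.zero_div r), by ext i; simp [Nat.mul_div_cancel' (hd i)]⟩
    rw [coeff_expand_smul]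
    show (if _ then _ else _) = _
    rw [if_pos hd]
    congr
    ext i
    simp [Nat.pos_of_ne_zero hr]
  · obtain ⟨i, hi⟩ := not_forall.1 hd
    rw [coeff_expand_of_not_dvd r hr f hi]
    exact if_neg hd

theorem raise_one (f : QT) : raise 1 f = f := by
  rw [raise_eq_expand one_ne_zero, expand_one_apply]

theorem raise_t_mul {r : ℕ} (hr : r ≠ 0) (f : QT) : raise r (t * f) = t ^ r * raise r f := by
  rw [raise_eq_expand hr, raise_eq_expand hr, map_mul, t, expand_X]

theorem le_order_raise {f : QT} (hf : constantCoeff f = 0) (r : ℕ) :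
    (r : ℕ∞) ≤ (raise r f).order := by
  rcases eq_or_ne r 0 with rfl | hr
  · simp
  rw [raise_eq_expand hr, order_expand]
  simpa using nsmul_le_nsmul_right (one_le_order_iff_constCoeff_eq_zero.2 hf) r

theorem le_order_prod_raise {f : QT} (hf : constantCoeff f = 0) (μ : Multiset ℕ) :
    (μ.sum : ℕ∞) ≤ (μ.map (raise · f)).prod.order :=
  calc (μ.sum : ℕ∞) = (μ.map ((↑) : ℕ → ℕ∞)).sum := Nat.cast_multiset_sum μ
    _ ≤ (μ.map fun r => (raise r f).order).sum :=
      Multiset.sum_map_le_sum_map _ _ fun r _ => le_order_raise hf r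
    _ ≤ _ := by simpa [Multiset.map_map] using le_order_multiset_prod (μ.map (raise · f))

theorem le_order_hPleth {f : QT} (hf : constantCoeff f = 0) (n : ℕ) :
    (n : ℕ∞) ≤ (hPleth n f).order := by
  refine le_order fun d hd => ?_
  simp only [hPleth, map_sum, coeff_smul]
  refine sum_eq_zero fun p _ => ?_
  have hp := le_order_prod_raise hf p.parts
  rw [p.parts_sum] at hp
  rw [coeff_of_lt_order (hd.trans_le hp), mul_zero]

theorem hPleth_zero (f : QT) : hPleth 0 f = 1 := by
  simp [hPleth, zPartition]

theorem hPleth_one (f : QT) : hPleth 1 f = f := by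
  simp [hPleth, zPartition, raise_one]

theorem hPleth_t_mul (n : ℕ) (f : QT) : hPleth n (t * f) = t ^ n * hPleth n f := by
  simp only [hPleth, mul_sum, mul_smul_comm]
  refine sum_congr rfl fun p _ => ?_
  rw [Multiset.map_congr rfl fun i hi => raise_t_mul (p.parts_pos hi).ne' f,
    Multiset.prod_map_mul, ← pow_multiset_sum, p.parts_sum]

theorem truncTotalAlgHom_plethSum {f : QT} (hf : constantCoeff f = 0) (D : ℕ) :
    truncTotalAlgHom (Fin 2) ℚ (D + 1) (plethSum f) =
      truncTotalAlgHom (Fin 2) ℚ (D + 1) (∑ r ∈ Icc 1 D, (r : ℚ)⁻¹ • raise r f) := by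
  refine truncTotalAlgHom_eq_iff.2 fun x hx => ?_
  rw [← deg_eq_degree, Nat.lt_succ_iff] at hx
  have hplethSum :
      coeff x (plethSum f) = coeff x (∑ r ∈ Icc 1 (deg x), (r : ℚ)⁻¹ • raise r f) := by
    simp only [map_sum, coeff_smul]
    rfl
  rw [hplethSum]
  refine coeff_sum_eq_of_subset_of_le_order (fun r => (le_order_raise hf r).trans le_order_smul)
    (Icc_subset_Icc_right hx) fun r hr hr' => ?_
  simp only [mem_Icc, not_and, not_le] at hr hr'
  rw [← deg_eq_degree]
  exact hr' hr.1

theorem coeff_PExp {f : QT} (hf : constantCoeff f = 0) (d : Fin 2 →₀ ℕ) :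
    coeff d (PExp f) = ∑ n ∈ range (deg d + 1), coeff d (hPleth n f) := by
  set D := deg d
  have hpow (m : ℕ) : coeff d (plethSum f ^ m) =
      coeff d ((∑ r ∈ Icc 1 D, (r : ℚ)⁻¹ • raise r f) ^ m) := by
    refine truncTotalAlgHom_eq_iff.1 ?_ d (by rw [← deg_eq_degree]; exact D.lt_succ_self)
    rw [map_pow, map_pow, truncTotalAlgHom_plethSum hf]
  calc coeff d (PExp f)
      = ∑ m ∈ range (D + 1), (m.factorial : ℚ)⁻¹ * coeff d (plethSum f ^ m) := rfl
    _ = ∑ m ∈ range (D + 1),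
          coeff d ((m.factorial : ℚ)⁻¹ • (∑ r ∈ Icc 1 D, (r : ℚ)⁻¹ • raise r f) ^ m) := by
        simp only [coeff_smul, hpow]
    _ = ∑ m ∈ range (D + 1), ∑ μ ∈ (Icc 1 D).sym m,
          coeff d ((zMultiset μ.val : ℚ)⁻¹ • (μ.val.map (raise · f)).prod) := by
        simp only [inv_factorial_smul_sum_pow, map_sum]
    _ = ∑ n ∈ range (D + 1), ∑ p : n.Partition,
          coeff d ((zMultiset p.parts : ℚ)⁻¹ • (p.parts.map (raise · f)).prod) := by
        refine sum_sym_Icc_eq_sum_partition D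
          (fun μ => coeff d ((zMultiset μ : ℚ)⁻¹ • (μ.map (raise · f)).prod)) fun μ hμ => ?_
        rw [coeff_smul, coeff_of_lt_order, mul_zero]
        refine lt_of_lt_of_le ?_ (le_order_prod_raise hf μ)
        rw [← deg_eq_degree]
        exact_mod_cast hμ
    _ = ∑ n ∈ range (D + 1), coeff d (hPleth n f) := by
        simp only [hPleth, map_sum, zPartition_eq_zMultiset]

theorem truncTotalAlgHom_PExp {f : QT} (hf : constantCoeff f = 0) (n : ℕ) :
    truncTotalAlgHom (Fin 2) ℚ n (PExp f) =
      ∑ k ∈ range n, truncTotalAlgHom (Fin 2) ℚ n (hPleth k f) := by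
  rw [← map_sum]
  refine truncTotalAlgHom_eq_iff.2 fun x hx => ?_
  rw [coeff_PExp hf, ← map_sum]
  refine coeff_sum_eq_of_subset_of_le_order (le_order_hPleth hf)
    (range_subset_range.2 (by rwa [deg_eq_degree])) fun k _ hk => ?_
  rw [mem_range, not_lt, deg_eq_degree] at hk
  exact hk

end QT

theorem one_sub_mul_sum_Icc_pow {R : Type*} [CommRing R] (T : R) (m : ℕ) :
    (1 - T) * ∑ i ∈ Icc 1 m, T ^ i = T - T ^ (m + 1) := by
  induction m with
  | zero => simp
  | succ m ih =>
    rw [sum_Icc_succ_top (by omega), mul_add, ih]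
    ring

theorem sum_pow_mul_sub_sq_mul_sum {R : Type*} [CommRing R] (T : R) (H : ℕ → R) {n : ℕ}
    (hn : 3 ≤ n) :
    ∑ k ∈ range n, T ^ k * H k - T ^ 2 * ∑ k ∈ range n, H k =
      (1 - T ^ 2) * H 0 + (T - T ^ 2) * H 1 -
        (1 - T) * T * ∑ r ∈ Ico 3 n, (∑ i ∈ Icc 1 (r - 2), T ^ i) * H r := by
  have hgeom (r : ℕ) (hr : 2 ≤ r) :
      T ^ r - T ^ 2 = -((1 - T) * T * ∑ i ∈ Icc 1 (r - 2), T ^ i) := by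
    rw [mul_comm (1 - T), mul_assoc, one_sub_mul_sum_Icc_pow, show r - 2 + 1 = r - 1 by omega]
    obtain ⟨s, rfl⟩ := Nat.exists_eq_add_of_le hr
    rw [show 2 + s - 1 = s + 1 by omega]
    ring
  have hlow : ∑ k ∈ range 3, (T ^ k * H k - T ^ 2 * H k) =
      (1 - T ^ 2) * H 0 + (T - T ^ 2) * H 1 := by
    simp only [sum_range_succ, sum_range_zero]
    ring
  rw [mul_sum, ← sum_sub_distrib, range_eq_Ico, ← sum_Ico_consecutive _ (Nat.zero_le 3) hn,
    ← range_eq_Ico, hlow, mul_sum, sub_eq_add_neg _ (∑ r ∈ Ico 3 n, _), ← sum_neg_distrib]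
  congr 1
  refine sum_congr rfl fun r hr => ?_
  rw [← sub_mul, hgeom r (by simp only [mem_Ico] at hr; omega)]
  ring

open QT in
/-- If `q⁺ ∈ ℚ⟦q,t⟧` has no constant term and satisfies the recursion
`q⁺ = q + ∑_{r ≥ 3} (t + t² + ⋯ + t^{r-2}) (h_r ∘ q⁺)` (read coefficientwise: the
term `h_r ∘ q⁺` has order ≥ r, so only `r ≤ deg d` contribute to the coefficient at
`d`), then `q⁺` satisfies the exponential equation
`Exp(t·q⁺) = t²·Exp(q⁺) + (1-t)(1+t+qt)`. -/
theorem qplus_recursion_implies_exponential (Qp : QT)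
    (h0 : MvPowerSeries.constantCoeff (σ := Fin 2) (R := ℚ) Qp = 0)
    (hrec : ∀ d : Fin 2 →₀ ℕ,
      MvPowerSeries.coeff (R := ℚ) d Qp =
        MvPowerSeries.coeff (R := ℚ) d
          (q + ∑ r ∈ Finset.Icc 3 (deg d),
            (∑ i ∈ Finset.Icc 1 (r - 2), t ^ i) * hPleth r Qp)) :
    PExp (t * Qp) = t ^ 2 * PExp Qp + (1 - t) * (1 + t + q * t) := by
  refine eq_of_eventually_truncTotalAlgHom_eq ((eventually_ge_atTop 3).mono fun n hn => ?_)
  have htQ : constantCoeff (t * Qp) = 0 := by rw [map_mul, h0, mul_zero]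
  simp only [map_add, map_mul, map_pow, map_sub, map_one, truncTotalAlgHom_PExp h0,
    truncTotalAlgHom_PExp htQ, hPleth_t_mul]
  set π := truncTotalAlgHom (Fin 2) ℚ n
  have hrec_trunc :
      π Qp = π q + ∑ r ∈ Ico 3 n, (∑ i ∈ Icc 1 (r - 2), π t ^ i) * π (hPleth r Qp) := by
    simp only [← map_pow, ← map_sum, ← map_mul, ← map_add]
    refine truncTotalAlgHom_eq_iff.2 fun x hx => ?_
    rw [hrec, map_add, map_add, coeff_sum_eq_of_subset_of_le_order
      (fun r => (le_order_hPleth h0 r).trans (le_add_self.trans le_order_mul))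
      (t := Ico 3 n) (x := x) (fun r => by simp only [mem_Icc, mem_Ico, deg_eq_degree]; omega)
      fun r => by simp only [mem_Icc, mem_Ico, deg_eq_degree]; omega]
  have hsplit := sum_pow_mul_sub_sq_mul_sum (π t) (fun k => π (hPleth k Qp)) hn
  simp only [hPleth_zero, hPleth_one, map_one] at hsplit
  linear_combination hsplit + (1 - π t) * π t * hrec_trunc
end

section
/- The formal power series 𝔠(t) = ∑_{k≥0} (k+1)^{k-1}/k! · t^k satisfies the functional equation 𝔠 = exp(t·𝔠). -/
/-!
STATEMENT 13: The formal power series `𝔠(t) = ∑_{k ≥ 0} (k+1)^{k-1}/k! · t^k`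
satisfies the functional equation `𝔠 = exp(t·𝔠)`.
-/

open PowerSeries

/-- The formal exponential `exp f = ∑_m f^m / m!`, defined coefficientwise
(valid for `f` with zero constant term). -/
noncomputable def psExp (f : PowerSeries ℚ) : PowerSeries ℚ :=
  PowerSeries.mk fun n =>
    ∑ m ∈ Finset.range (n + 1),
      ((m.factorial : ℚ)⁻¹) * PowerSeries.coeff n (f ^ m)

/-- The series `𝔠 = ∑_{k ≥ 0} (k+1)^{k-1}/k! t^k` (with `(k+1)^{k-1}` read as the
rational number `(k+1)^{k-1}`, so `c_0 = 1`). -/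
noncomputable def cayleySeries : PowerSeries ℚ :=
  PowerSeries.mk fun k => ((k : ℚ) + 1) ^ ((k : ℤ) - 1) / (k.factorial : ℚ)

/-!
The normalised Abel polynomials `a_n(x) = x (x + n)^(n-1) / n!` satisfy
`a_{n+1}'(x) = a_n(x + 1)` and `a_{n+1}(0) = 0`; by induction on `n` this makes them of binomial
type, `a_n(x + y) = ∑_{i+j=n} a_i(x) a_j(y)`. So the series `A_x = ∑ a_n(x) tⁿ` satisfy
`A_{x+y} = A_x A_y`, and since `𝔠 = A_1` we get `𝔠^m = A_m`. The coefficient of `tⁿ` in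
`exp(t𝔠) = ∑ t^m 𝔠^m / m!` is therefore `∑_{m+j=n} a_j(m) / m!`, and as
`a_j(m) (m + j) = m (m + j)^j / j!` the binomial theorem evaluates it to
`a_n(1) = (n+1)^(n-1) / n!`.
-/

open Finset
open scoped Nat

namespace Polynomial

noncomputable def abelPoly (K : Type*) [Field K] : ℕ → K[X]
  | 0 => 1
  | n + 1 => C ((n + 1)! : K)⁻¹ * (X * (X + (n + 1 : K[X])) ^ n)

variable {K : Type*} [Field K]

@[simp]
theorem abelPoly_zero : abelPoly K 0 = 1 := rfl

theorem abelPoly_succ_eval (n : ℕ) (x : K) :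
    (abelPoly K (n + 1)).eval x = x * (x + (n + 1)) ^ n / (n + 1)! := by
  simp only [abelPoly, eval_mul, eval_C, eval_X, eval_pow, eval_add, eval_natCast, eval_one]
  ring

theorem abelPoly_succ_eval_zero (n : ℕ) : (abelPoly K (n + 1)).eval 0 = 0 := by
  simp [abelPoly_succ_eval]

theorem abelPoly_eval_mul_add (n : ℕ) (x : K) :
    (abelPoly K n).eval x * (x + n) = x * (x + n) ^ n / n ! := by
  cases n with
  | zero => simp
  | succ n =>
    rw [abelPoly_succ_eval]
    push_cast
    ring

variable [CharZero K]

theorem derivative_abelPoly_succ (n : ℕ) :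
    derivative (abelPoly K (n + 1)) = (abelPoly K n).comp (X + 1) := by
  cases n with
  | zero => simp [abelPoly]
  | succ n =>
    have hfact : C ((n + 2)! : K)⁻¹ * (n + 1 + 1 : K[X]) = C ((n + 1)! : K)⁻¹ := by
      rw [← map_one C, ← map_natCast C, ← map_add, ← map_add, ← C_mul, Nat.factorial_succ]
      congr 1
      have h : (n : K) + 1 + 1 ≠ 0 := by exact_mod_cast (n + 1).succ_ne_zero
      push_cast
      field_simp
    have hderiv : derivative (X * (X + (n + 1 + 1 : K[X])) ^ (n + 1)) =
        (n + 1 + 1 : K[X]) * ((X + 1) * (X + 1 + (n + 1 : K[X])) ^ n) := by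
      simp only [derivative_mul, derivative_X, derivative_pow_succ, derivative_natCast,
        derivative_one, map_add, map_natCast, map_one]
      ring
    simp only [abelPoly, derivative_C_mul, mul_comp, C_comp, X_comp, pow_comp, add_comp,
      natCast_comp, one_comp]
    push_cast
    rw [hderiv, ← mul_assoc, hfact]

theorem abelPoly_comp_X_add_C (n : ℕ) (y : K) :
    (abelPoly K n).comp (X + C y) =
      ∑ p ∈ antidiagonal n, abelPoly K p.1 * C ((abelPoly K p.2).eval y) := by
  induction n with
  | zero => simp
  | succ n ih =>
    rw [← sub_eq_zero]
    set D := (abelPoly K (n + 1)).comp (X + C y) -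
      ∑ p ∈ antidiagonal (n + 1), abelPoly K p.1 * C ((abelPoly K p.2).eval y)
    have hD : derivative D = 0 := by
      have ih' := congrArg (fun q => q.comp (X + 1)) ih
      simp only [sum_comp, mul_comp, C_comp, comp_assoc, add_comp, X_comp] at ih'
      calc derivative D = (abelPoly K n).comp (X + 1 + C y) -
            ∑ p ∈ antidiagonal n,
              (abelPoly K p.1).comp (X + 1) * C ((abelPoly K p.2).eval y) := by
            simp only [D, derivative_sub, derivative_comp, derivative_sum, derivative_mul,
              derivative_C, mul_zero, add_zero, Nat.sum_antidiagonal_succ,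
              derivative_abelPoly_succ, derivative_add, derivative_X, one_mul, comp_assoc, X_comp,
              add_comp, one_comp, abelPoly_zero, zero_add, add_right_comm _ (C y)]
        _ = 0 := by rw [ih', sub_self]
    have hD0 : D.eval 0 = 0 := by
      simp [D, eval_finsetSum, Nat.sum_antidiagonal_succ, abelPoly_succ_eval_zero]
    rw [eq_C_of_derivative_eq_zero hD, coeff_zero_eq_eval_zero, hD0, map_zero]

end Polynomial

open Polynomial (abelPoly)

variable {K : Type*} [Field K]

noncomputable def abelSeries (x : K) : K⟦X⟧ :=
  PowerSeries.mk fun n => (abelPoly K n).eval x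

theorem coeff_abelSeries (x : K) (n : ℕ) : coeff n (abelSeries x) = (abelPoly K n).eval x :=
  coeff_mk _ _

theorem abelSeries_zero : abelSeries (0 : K) = 1 := by
  ext n
  cases n with
  | zero => simp [coeff_abelSeries]
  | succ n => simp [coeff_abelSeries, Polynomial.abelPoly_succ_eval_zero]

variable [CharZero K]

theorem abelSeries_add (x y : K) : abelSeries (x + y) = abelSeries x * abelSeries y := by
  ext n
  simpa [coeff_mul, coeff_abelSeries, Polynomial.eval_comp, Polynomial.eval_finsetSum] using
    congrArg (Polynomial.eval x) (Polynomial.abelPoly_comp_X_add_C n y)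

theorem abelSeries_natCast (m : ℕ) : abelSeries (m : K) = abelSeries 1 ^ m := by
  induction m with
  | zero => simp [abelSeries_zero]
  | succ m ih => rw [Nat.cast_succ, abelSeries_add, ih, pow_succ]

theorem sum_antidiagonal_pow_div_factorial (a b : K) (n : ℕ) :
    ∑ p ∈ antidiagonal n, a ^ p.1 / p.1 ! * (b ^ p.2 / p.2 !) = (a + b) ^ n / n ! := by
  simpa [coeff_mul, coeff_exp, div_eq_mul_inv, mul_comm, mul_left_comm, mul_assoc] using
    congrArg (coeff n) (exp_mul_exp_eq_exp_add a b)

theorem sum_antidiagonal_inv_factorial_mul_abelPoly_eval (n : ℕ) :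
    ∑ p ∈ antidiagonal n, (p.1 ! : K)⁻¹ * (abelPoly K p.2).eval (p.1 : K) =
      (abelPoly K n).eval 1 := by
  cases n with
  | zero => simp
  | succ n =>
    have hn : ((n + 1 : ℕ) : K) ≠ 0 := Nat.cast_ne_zero.mpr n.succ_ne_zero
    refine mul_right_cancel₀ hn ?_
    calc (∑ p ∈ antidiagonal (n + 1), (p.1 ! : K)⁻¹ * (abelPoly K p.2).eval (p.1 : K)) *
          (n + 1 : ℕ)
        = ∑ p ∈ antidiagonal (n + 1),
            (p.1 ! : K)⁻¹ * (p.1 * ((n + 1 : ℕ) : K) ^ p.2 / p.2 !) := by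
          rw [sum_mul]
          refine sum_congr rfl fun p hp => ?_
          rw [← mem_antidiagonal.mp hp, mul_assoc, Nat.cast_add, Polynomial.abelPoly_eval_mul_add]
      _ = ∑ p ∈ antidiagonal n, 1 ^ p.1 / p.1 ! * (((n + 1 : ℕ) : K) ^ p.2 / p.2 !) := by
          rw [Nat.sum_antidiagonal_succ]
          simp only [Nat.cast_zero, zero_mul, zero_div, mul_zero, zero_add, one_pow]
          refine sum_congr rfl fun p _ => ?_
          rw [Nat.factorial_succ]
          push_cast
          field_simp
      _ = (abelPoly K (n + 1)).eval 1 * (n + 1 : ℕ) := by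
          rw [sum_antidiagonal_pow_div_factorial, Polynomial.abelPoly_succ_eval,
            Nat.factorial_succ]
          push_cast
          field_simp

theorem coeff_psExp_X_mul (f : ℚ⟦X⟧) (n : ℕ) :
    coeff n (psExp (X * f)) =
      ∑ p ∈ antidiagonal n, (p.1 ! : ℚ)⁻¹ * coeff p.2 (f ^ p.1) := by
  rw [psExp, coeff_mk, Nat.sum_antidiagonal_eq_sum_range_succ_mk]
  refine sum_congr rfl fun m hm => ?_
  rw [mul_pow, coeff_X_pow_mul', if_pos (Nat.lt_succ_iff.mp (mem_range.mp hm))]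

theorem cayleySeries_eq_abelSeries_one : cayleySeries = abelSeries (1 : ℚ) := by
  ext n
  rw [cayleySeries, coeff_mk, coeff_abelSeries]
  cases n with
  | zero => simp
  | succ n =>
    rw [Polynomial.abelPoly_succ_eval]
    push_cast
    rw [add_sub_cancel_right, zpow_natCast]
    ring

theorem cayleySeries_eq_exp_X_mul_self :
    cayleySeries = psExp (PowerSeries.X * cayleySeries) := by
  ext n
  simp only [coeff_psExp_X_mul, cayleySeries_eq_abelSeries_one, ← abelSeries_natCast,
    coeff_abelSeries]
  exact (sum_antidiagonal_inv_factorial_mul_abelPoly_eval n).symm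
end

section
/- For every integer k ≥ 1, the sequence a_n := (k+1)^{k-1}/(k!)² · n^k is asymptotically strictly log-concave in k with explicit bound: ((k+1)^{k-1}/(k!)²)² / ((k^{k-2}/((k-1)!)²)·((k+2)^k/((k+1)!)²)) = (1 + 1/(k²+2k))^k ≥ 1 + 1/(k+2) > 1. -/
/-!
STATEMENT 16: For every integer `k ≥ 1`, the leading coefficients
`a_k = (k+1)^{k-1}/(k!)²` of the asymptotics of the Betti numbers of
`M̄_{0,n+1}/S_n` satisfy the explicit log-concavity bound
`a_k² / (a_{k-1}·a_{k+1}) = (1 + 1/(k²+2k))^k ≥ 1 + 1/(k+2) > 1`,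
where `a_{k-1} = k^{k-2}/((k-1)!)²` and `a_{k+1} = (k+2)^k/((k+1)!)²`
(with `k^{k-2}` read as an integer power of a rational number).
-/

theorem asymptotic_log_concavity_bound (k : ℕ) (hk : 1 ≤ k) :
    ((((k : ℚ) + 1) ^ (k - 1) / ((k.factorial : ℚ)) ^ 2) ^ 2 /
        (((k : ℚ) ^ ((k : ℤ) - 2) / (((k - 1).factorial : ℚ)) ^ 2) *
          (((k : ℚ) + 2) ^ k / (((k + 1).factorial : ℚ)) ^ 2))
      = (1 + 1 / ((k : ℚ) ^ 2 + 2 * k)) ^ k) ∧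
    (1 + 1 / ((k : ℚ) ^ 2 + 2 * k)) ^ k ≥ 1 + 1 / ((k : ℚ) + 2) ∧
    (1 : ℚ) + 1 / ((k : ℚ) + 2) > 1 := by
  obtain ⟨m, rfl⟩ : ∃ m, k = m + 1 := ⟨k - 1, by omega⟩
  have h1 : ((m:ℚ) + 1) ≠ 0 := by positivity
  have h2 : ((m:ℚ) + 2) ≠ 0 := by positivity
  have h3 : ((m:ℚ) + 3) ≠ 0 := by positivity
  have hf : (m.factorial : ℚ) ≠ 0 := by exact_mod_cast m.factorial_ne_zero
  refine ⟨?_, ?_, ?_⟩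
  · have hz : (((m + 1 : ℕ) : ℚ)) ^ (((m + 1 : ℕ) : ℤ) - 2)
        = ((m:ℚ) + 1) ^ (m + 1) / ((m:ℚ) + 1) ^ 2 := by
      rw [show (((m + 1 : ℕ) : ℤ) - 2) = ((m + 1 : ℕ) : ℤ) - ((2 : ℕ) : ℤ) by push_cast; ring,
        zpow_sub₀ (by exact_mod_cast h1), zpow_natCast, zpow_natCast]
      push_cast
      ring
    have hrhs : (1 + 1 / (((m + 1 : ℕ) : ℚ) ^ 2 + 2 * ((m + 1 : ℕ) : ℚ))) ^ (m + 1)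
        = ((m:ℚ) + 2) ^ (2 * (m + 1)) / (((m:ℚ) + 1) ^ (m + 1) * ((m:ℚ) + 3) ^ (m + 1)) := by
      have : (1 + 1 / (((m + 1 : ℕ) : ℚ) ^ 2 + 2 * ((m + 1 : ℕ) : ℚ)))
          = ((m:ℚ) + 2) ^ 2 / (((m:ℚ) + 1) * ((m:ℚ) + 3)) := by
        push_cast
        field_simp
        ring
      rw [this, div_pow, mul_pow, ← pow_mul]
    rw [hz, hrhs]
    have hsub : (m + 1) - 1 = m := rfl
    rw [hsub, Nat.factorial_succ (m + 1), Nat.factorial_succ m]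
    push_cast
    field_simp
    ring
  · have hb : (1 : ℚ) + ((m + 1 : ℕ) : ℚ) * (1 / (((m + 1 : ℕ) : ℚ) ^ 2 + 2 * ((m + 1 : ℕ) : ℚ)))
        ≤ (1 + 1 / (((m + 1 : ℕ) : ℚ) ^ 2 + 2 * ((m + 1 : ℕ) : ℚ))) ^ (m + 1) := by
      apply one_add_mul_le_pow
      have : (0:ℚ) ≤ 1 / (((m + 1 : ℕ) : ℚ) ^ 2 + 2 * ((m + 1 : ℕ) : ℚ)) := by positivity
      linarith
    refine le_trans (le_of_eq ?_) hb
    push_cast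
    field_simp
  · have : (0:ℚ) < 1 / (((m + 1 : ℕ) : ℚ) + 2) := by positivity
    linarith
end

section
/- For every integer k ≥ 1, (k/(k+1))·(1 + 1/(k²+2k))^k < 1. Consequently the leading coefficients (k+1)^{k-1}/(k!)² of the asymptotics of q_{n,k} fail ultra-log-concavity: lim_{n→∞} (q_{n,k}/C(n-2,k))² / ((q_{n,k-1}/C(n-2,k-1))·(q_{n,k+1}/C(n-2,k+1))) = (k+1)^{2k-1}/(k^{k-1}(k+2)^k) < 1. -/
/-!
STATEMENT 17: For every integer `k ≥ 1`, `(k/(k+1))·(1 + 1/(k²+2k))^k < 1`, and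
consequently the limiting ratio in the ultra-log-concavity test for the Betti
numbers of `M̄_{0,n+1}/S_n`, namely `(k+1)^{2k-1}/(k^{k-1}·(k+2)^k)`, is `< 1`.
-/

theorem ultra_log_concavity_fails (k : ℕ) (hk : 1 ≤ k) :
    ((k : ℚ) / ((k : ℚ) + 1)) * (1 + 1 / ((k : ℚ) ^ 2 + 2 * k)) ^ k < 1 ∧
    ((k : ℚ) + 1) ^ (2 * k - 1) / ((k : ℚ) ^ (k - 1) * ((k : ℚ) + 2) ^ k) < 1 := by
  have hx1 : (1 : ℚ) ≤ (k : ℚ) := by exact_mod_cast hk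
  set x : ℚ := (k : ℚ) with hxdef
  have hx0 : (0 : ℚ) < x := by linarith
  have hd : (0 : ℚ) < x ^ 2 + 2 * x := by nlinarith
  set a : ℚ := 1 / (x ^ 2 + 2 * x) with hadef
  have ha0 : 0 < a := by positivity
  have ha1 : a < 1 := by
    rw [hadef, div_lt_one hd]; nlinarith
  have hka : (k : ℚ) * a = 1 / (x + 2) := by
    rw [hadef, ← hxdef]
    rw [mul_one_div, div_eq_div_iff hd.ne' (by positivity)]
    ring
  have hbern : 1 - (k : ℚ) * a ≤ (1 - a) ^ k := by
    have h := one_add_mul_le_pow (a := -a) (by linarith) k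
    have : 1 + (k : ℚ) * (-a) ≤ (1 + -a) ^ k := h
    have e1 : (1 : ℚ) + (k : ℚ) * (-a) = 1 - (k : ℚ) * a := by ring
    have e2 : ((1 : ℚ) + -a) = 1 - a := by ring
    rwa [e1, e2] at this
  have hprod : (1 + a) ^ k * (1 - a) ^ k = (1 - a ^ 2) ^ k := by
    rw [← mul_pow]; ring_nf
  have hlt1 : (1 - a ^ 2) ^ k < 1 := by
    apply pow_lt_one₀ (by nlinarith) (by nlinarith) (by omega)
  set P : ℚ := (1 + a) ^ k with hPdef
  have hP0 : 0 < P := by positivity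
  have h2 : P * (1 - (k : ℚ) * a) < 1 := by
    have h1 : P * (1 - (k : ℚ) * a) ≤ P * ((1 - a) ^ k) :=
      mul_le_mul_of_nonneg_left hbern (le_of_lt hP0)
    calc P * (1 - (k : ℚ) * a) ≤ P * (1 - a) ^ k := h1
      _ = (1 - a ^ 2) ^ k := hprod
      _ < 1 := hlt1
  rw [hka] at h2
  -- h2 : P * (1 - 1/(x+2)) < 1
  have hxP : x * P < x + 1 := by
    have hkey : P * (x + 1) < x + 2 := by
      have h3 : P * ((x + 1) / (x + 2)) < 1 := by
        have : (1 : ℚ) - 1 / (x + 2) = (x + 1) / (x + 2) := by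
          field_simp
          ring
        rwa [this] at h2
      rw [← mul_div_assoc, div_lt_one (by linarith)] at h3
      linarith
    nlinarith [mul_lt_mul_of_pos_left hkey hx0]
  have hgoal1 : x / (x + 1) * P < 1 := by
    rw [div_mul_eq_mul_div, div_lt_one (by linarith)]
    linarith [hxP]
  constructor
  · exact hgoal1
  · -- rewrite P as a ratio of powers
    have hPratio : P * (x ^ k * (x + 2) ^ k) = (x + 1) ^ (2 * k) := by
      have h1a : (1 + a) * (x * (x + 2)) = (x + 1) ^ 2 := by
        rw [hadef]; field_simp; ring
      calc P * (x ^ k * (x + 2) ^ k) = ((1 + a) * (x * (x + 2))) ^ k := by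
            rw [hPdef, mul_pow, mul_pow]
        _ = ((x + 1) ^ 2) ^ k := by rw [h1a]
        _ = (x + 1) ^ (2 * k) := by rw [← pow_mul, Nat.mul_comm]
    have hden2 : (0 : ℚ) < x ^ (k - 1) * (x + 2) ^ k := by positivity
    rw [div_lt_one hden2]
    have e1 : (x + 1) ^ (2 * k) = (x + 1) ^ (2 * k - 1) * (x + 1) := by
      rw [← pow_succ]; congr 1; omega
    have e2 : x ^ k = x ^ (k - 1) * x := by
      rw [← pow_succ]; congr 1; omega
    have hmul : x * (x + 1) ^ (2 * k) < (x + 1) * (x ^ k * (x + 2) ^ k) := by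
      have := mul_lt_mul_of_pos_right hxP (show (0:ℚ) < x ^ k * (x + 2) ^ k by positivity)
      calc x * (x + 1) ^ (2 * k) = x * (P * (x ^ k * (x + 2) ^ k)) := by rw [hPratio]
        _ = x * P * (x ^ k * (x + 2) ^ k) := by ring
        _ < (x + 1) * (x ^ k * (x + 2) ^ k) := this
    rw [e1, e2] at hmul
    have hc : (0 : ℚ) < x * (x + 1) := by positivity
    have : x * (x + 1) * ((x + 1) ^ (2 * k - 1)) < x * (x + 1) * (x ^ (k - 1) * (x + 2) ^ k) := by
      nlinarith [hmul]
    exact lt_of_mul_lt_mul_left this (le_of_lt hc)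
end
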